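/- arXiv:1603.09511 — 8 statements merged into one kernel-verified Lean document; each statement's English description precedes it below -/
import Mathlib

section
/- For finite sets ω₁, ω₂, ω₁', ω₂' over a finite universe, the Hamming distance H (cardinality of symmetric difference) satisfies the unconditional submodularity-style inequality H(ω₁ ∩ ω₂, ω₁' ∩ ω₂') + H(ω₁ ∪ ω₂, ω₁' ∪ ω₂') ≤ H(ω₁, ω₁') + H(ω₂, ω₂'). -/
def hamming {U : Type*} [DecidableEq U] (s t : Finset U) : ℕ := (s \ t ∪ t \ s).card

lemma hamming_eq_sum {U : Type*} [DecidableEq U] [Fintype U] (s t : Finset U) :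
    hamming s t = ∑ x : U, (if (x ∈ s) ≠ (x ∈ t) then 1 else 0) := by
  have : s \ t ∪ t \ s = Finset.univ.filter (fun x => (x ∈ s) ≠ (x ∈ t)) := by
    ext x
    simp only [Finset.mem_union, Finset.mem_sdiff, Finset.mem_filter, Finset.mem_univ, true_and]
    tauto
  rw [hamming, this, Finset.card_filter]

theorem stmt_0 {U : Type*} [DecidableEq U] [Fintype U]
    (ω₁ ω₂ ω₁' ω₂' : Finset U) :
    hamming (ω₁ ∩ ω₂) (ω₁' ∩ ω₂') + hamming (ω₁ ∪ ω₂) (ω₁' ∪ ω₂') ≤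
      hamming ω₁ ω₁' + hamming ω₂ ω₂' := by
  simp only [hamming_eq_sum, ← Finset.sum_add_distrib]
  apply Finset.sum_le_sum
  intro x _
  simp only [Finset.mem_inter, Finset.mem_union]
  by_cases h1 : x ∈ ω₁ <;> by_cases h2 : x ∈ ω₂ <;> by_cases h3 : x ∈ ω₁' <;>
    by_cases h4 : x ∈ ω₂' <;> simp [h1, h2, h3, h4]
end

section
/- Let M be a set of interpretations closed under pairwise intersection, pairwise union, and 'betweenness' (if ω₁, ω₂ ∈ M and ω₁ ⊆ ω₃ ⊆ ω₂ then ω₃ ∈ M). Then for any interpretations ω₁, ω₂, H(ω₁, M) + H(ω₂, M) ≥ H(ω₁ ∩ ω₂, M) + H(ω₁ ∪ ω₂, M), where H(ω, M) = min over ω' ∈ M of H(ω, ω'). -/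
/-- Hamming distance from an interpretation to a set of interpretations. -/
noncomputable def distToSet {U : Type*} [DecidableEq U] (ω : Finset U) (M : Set (Finset U)) : ℕ :=
  sInf {n : ℕ | ∃ τ ∈ M, n = hamming ω τ}

lemma distToSet_le {U : Type*} [DecidableEq U] (ω τ : Finset U) (M : Set (Finset U))
    (h : τ ∈ M) : distToSet ω M ≤ hamming ω τ :=
  Nat.sInf_le ⟨τ, h, rfl⟩

lemma hamming_sum {U : Type*} [DecidableEq U] [Fintype U] (s t : Finset U) :
    hamming s t = ∑ u : U, if ((u ∈ s) ↔ (u ∈ t)) then 0 else 1 := by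
  have h : s \ t ∪ t \ s = Finset.univ.filter (fun u => ¬((u ∈ s) ↔ (u ∈ t))) := by
    ext u
    by_cases hs : u ∈ s <;> by_cases ht : u ∈ t <;> simp [hs, ht]
  rw [hamming, h, Finset.card_filter]
  apply Finset.sum_congr rfl
  intro u _
  by_cases h' : (u ∈ s) ↔ (u ∈ t) <;> simp [h']

lemma hamming_submodular {U : Type*} [DecidableEq U] [Fintype U] (a b c d : Finset U) :
    hamming (a ∩ b) (c ∩ d) + hamming (a ∪ b) (c ∪ d) ≤ hamming a c + hamming b d := by
  simp only [hamming_sum, ← Finset.sum_add_distrib]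
  apply Finset.sum_le_sum
  intro u _
  by_cases ha : u ∈ a <;> by_cases hb : u ∈ b <;> by_cases hc : u ∈ c <;>
    by_cases hd : u ∈ d <;> simp [ha, hb, hc, hd]

theorem stmt_3 {U : Type*} [DecidableEq U] [Fintype U]
    (M : Set (Finset U)) (hMne : M.Nonempty)
    (hcap : ∀ x ∈ M, ∀ y ∈ M, x ∩ y ∈ M)
    (hcup : ∀ x ∈ M, ∀ y ∈ M, x ∪ y ∈ M)
    (hbetween : ∀ x ∈ M, ∀ y ∈ M, ∀ z : Finset U, x ⊆ z → z ⊆ y → z ∈ M)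
    (ω₁ ω₂ ω₁' ω₂' : Finset U)
    (h₁ : ω₁' ∈ M) (h₂ : ω₂' ∈ M)
    (hmin₁ : hamming ω₁ ω₁' = distToSet ω₁ M)
    (hmin₂ : hamming ω₂ ω₂' = distToSet ω₂ M) :
    distToSet (ω₁ ∩ ω₂) M + distToSet (ω₁ ∪ ω₂) M ≤
      distToSet ω₁ M + distToSet ω₂ M := by
  calc distToSet (ω₁ ∩ ω₂) M + distToSet (ω₁ ∪ ω₂) M
      ≤ hamming (ω₁ ∩ ω₂) (ω₁' ∩ ω₂') + hamming (ω₁ ∪ ω₂) (ω₁' ∪ ω₂') :=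
        Nat.add_le_add (distToSet_le _ _ _ (hcap _ h₁ _ h₂))
          (distToSet_le _ _ _ (hcup _ h₁ _ h₂))
    _ ≤ hamming ω₁ ω₁' + hamming ω₂ ω₂' := hamming_submodular _ _ _ _
    _ = distToSet ω₁ M + distToSet ω₂ M := by rw [hmin₁, hmin₂]
end

section
/- If a nonempty finite set of interpretations K is not 1CNF-closed (i.e., not closed under intersection, union, and betweenness), then there exist two incomparable interpretations ω₁, ω₂ in the 1CNF-closure of K such that one of the five 'critical pair' configurations holds: (1) ω₁, ω₂ ∈ K but ω₁∩ω₂, ω₁∪ω₂ ∉ K; (2) ω₁, ω₂, ω₁∩ω₂ ∈ K but ω₁∪ω₂ ∉ K; (3) ω₁, ω₂, ω₁∪ω₂ ∈ K but ω₁∩ω₂ ∉ K; (4) ω₁∩ω₂, ω₁∪ω₂ ∈ K but ω₁, ω₂ ∉ K; (5) ω₁, ω₁∩ω₂, ω₁∪ω₂ ∈ K but ω₂ ∉ K. -/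
/-- A set of interpretations is 1CNF-closed if closed under intersection,
union, and betweenness. -/
def oneCNFClosed {U : Type*} [DecidableEq U] (S : Set (Finset U)) : Prop :=
  (∀ x ∈ S, ∀ y ∈ S, x ∩ y ∈ S) ∧ (∀ x ∈ S, ∀ y ∈ S, x ∪ y ∈ S) ∧
  (∀ x ∈ S, ∀ y ∈ S, ∀ z : Finset U, x ⊆ z → z ⊆ y → z ∈ S)

/-- The 1CNF-closure of a set of interpretations. -/
def oneCNFCl {U : Type*} [DecidableEq U] (M : Set (Finset U)) : Set (Finset U) :=
  ⋂₀ {S : Set (Finset U) | M ⊆ S ∧ oneCNFClosed S}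

lemma memCl {U : Type*} [DecidableEq U] {K : Finset (Finset U)} {w : Finset U}
    (hw : w ∈ K) : w ∈ oneCNFCl (↑K : Set (Finset U)) := by
  intro S hS
  exact hS.1 hw

lemma betweenCl {U : Type*} [DecidableEq U] {K : Finset (Finset U)} {u w : Finset U}
    (hu : u ∈ K) (hw : w ∈ K) (v : Finset U) (huv : u ⊆ v) (hvw : v ⊆ w) :
    v ∈ oneCNFCl (↑K : Set (Finset U)) := by
  intro S hS
  exact hS.2.2.2 u (hS.1 hu) w (hS.1 hw) v huv hvw


lemma exists_maxSub {U : Type*} [DecidableEq U] (K : Finset (Finset U))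
    (hUn : ∀ x ∈ K, ∀ y ∈ K, x ∪ y ∈ K) (z : Finset U)
    (hne : ∃ x ∈ K, x ⊆ z) :
    ∃ a ∈ K, a ⊆ z ∧ ∀ w ∈ K, w ⊆ z → w ⊆ a := by
  classical
  obtain ⟨x, hx, hxz⟩ := hne
  have hSne : (K.filter (fun w => w ⊆ z)).Nonempty := ⟨x, by simp [hx, hxz]⟩
  have hk : (K.filter (fun w => w ⊆ z)).sup' hSne id ∈ K ∧
      (K.filter (fun w => w ⊆ z)).sup' hSne id ⊆ z := by
    apply Finset.sup'_induction hSne id (p := fun w => w ∈ K ∧ w ⊆ z)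
    · intro b hb c hc
      exact ⟨by simpa using hUn b hb.1 c hc.1,
        by simpa using Finset.union_subset hb.2 hc.2⟩
    · intro b hb
      simpa using Finset.mem_filter.mp hb
  refine ⟨_, hk.1, hk.2, fun w hw hwz => ?_⟩
  have hmem : w ∈ K.filter (fun w => w ⊆ z) := by simp [hw, hwz]
  exact Finset.le_sup' id hmem

lemma exists_minSup {U : Type*} [DecidableEq U] (K : Finset (Finset U))
    (hInt : ∀ x ∈ K, ∀ y ∈ K, x ∩ y ∈ K) (p : U) (a : Finset U)
    (hne : ∃ x ∈ K, p ∈ x ∧ a ⊆ x) :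
    ∃ d ∈ K, (p ∈ d ∧ a ⊆ d) ∧ ∀ w ∈ K, p ∈ w → a ⊆ w → d ⊆ w := by
  classical
  obtain ⟨x, hx, hpx⟩ := hne
  have hSne : (K.filter (fun w => p ∈ w ∧ a ⊆ w)).Nonempty :=
    ⟨x, by simp [hx, hpx.1, hpx.2]⟩
  have hk : (K.filter (fun w => p ∈ w ∧ a ⊆ w)).inf' hSne id ∈ K ∧
      p ∈ (K.filter (fun w => p ∈ w ∧ a ⊆ w)).inf' hSne id ∧
      a ⊆ (K.filter (fun w => p ∈ w ∧ a ⊆ w)).inf' hSne id := by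
    apply Finset.inf'_induction hSne id (p := fun w => w ∈ K ∧ p ∈ w ∧ a ⊆ w)
    · intro b hb c hc
      refine ⟨by simpa using hInt b hb.1 c hc.1, ?_, ?_⟩
      · simp only [Finset.inf_eq_inter, Finset.mem_inter]
        exact ⟨hb.2.1, hc.2.1⟩
      · simp only [Finset.inf_eq_inter]
        exact Finset.subset_inter hb.2.2 hc.2.2
    · intro b hb
      simpa using Finset.mem_filter.mp hb
  refine ⟨_, hk.1, ⟨hk.2.1, hk.2.2⟩, fun w hw hpw haw => ?_⟩
  have hmem : w ∈ K.filter (fun w => p ∈ w ∧ a ⊆ w) := by simp [hw, hpw, haw]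
  exact Finset.inf'_le id hmem

theorem stmt_5 {U : Type*} [DecidableEq U] [Fintype U]
    (K : Finset (Finset U)) (hne : K.Nonempty)
    (hnotclosed : ¬ oneCNFClosed (↑K : Set (Finset U))) :
    ∃ ω₁ ω₂ : Finset U,
      ω₁ ∈ oneCNFCl (↑K : Set (Finset U)) ∧ ω₂ ∈ oneCNFCl (↑K : Set (Finset U)) ∧
      ¬ ω₁ ⊆ ω₂ ∧ ¬ ω₂ ⊆ ω₁ ∧
      ((ω₁ ∈ K ∧ ω₂ ∈ K ∧ ω₁ ∩ ω₂ ∉ K ∧ ω₁ ∪ ω₂ ∉ K) ∨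
       (ω₁ ∈ K ∧ ω₂ ∈ K ∧ ω₁ ∩ ω₂ ∈ K ∧ ω₁ ∪ ω₂ ∉ K) ∨
       (ω₁ ∈ K ∧ ω₂ ∈ K ∧ ω₁ ∪ ω₂ ∈ K ∧ ω₁ ∩ ω₂ ∉ K) ∨
       (ω₁ ∩ ω₂ ∈ K ∧ ω₁ ∪ ω₂ ∈ K ∧ ω₁ ∉ K ∧ ω₂ ∉ K) ∨
       (ω₁ ∈ K ∧ ω₁ ∩ ω₂ ∈ K ∧ ω₁ ∪ ω₂ ∈ K ∧ ω₂ ∉ K)) := by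
  classical
  by_cases hInt : ∀ x ∈ K, ∀ y ∈ K, x ∩ y ∈ K
  · by_cases hUn : ∀ x ∈ K, ∀ y ∈ K, x ∪ y ∈ K
    · -- betweenness must fail
      have hBet : ¬ (∀ x ∈ K, ∀ y ∈ K, ∀ z : Finset U, x ⊆ z → z ⊆ y → z ∈ K) := by
        intro h
        exact hnotclosed ⟨by simpa using hInt, by simpa using hUn, by simpa using h⟩
      push_neg at hBet
      obtain ⟨x, hx, y, hy, z, hxz, hzy, hzK⟩ := hBet
      -- a : the largest element of K contained in z
      obtain ⟨a, haK, haz', hmax⟩ := exists_maxSub K hUn z ⟨x, hx, hxz⟩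
      have haprop : a ∈ K ∧ a ⊆ z := ⟨haK, haz'⟩
      have haz : a ⊂ z := by
        refine lt_of_le_of_ne haprop.2 ?_
        intro h
        exact hzK (h ▸ haprop.1)
      obtain ⟨p, hpz, hpa⟩ := Finset.exists_of_ssubset haz
      -- d : the smallest element of K containing p and a
      obtain ⟨d, hdK, hdpa, hmin⟩ :=
        exists_minSup K hInt p a ⟨y, hy, hzy hpz, haprop.2.trans hzy⟩
      have hdprop : d ∈ K ∧ p ∈ d ∧ a ⊆ d := ⟨hdK, hdpa.1, hdpa.2⟩
      -- d is not contained in insert p a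
      have hdnsub : ¬ d ⊆ insert p a := by
        intro h
        have hdz : d ⊆ z := h.trans (Finset.insert_subset hpz haprop.2)
        have := hmax d hdprop.1 hdz
        exact hpa (this hdprop.2.1)
      obtain ⟨q, hqd, hqpa⟩ := Finset.not_subset.mp hdnsub
      have hqp : q ≠ p := fun h => hqpa (h ▸ Finset.mem_insert_self p a)
      have hqa : q ∉ a := fun h => hqpa (Finset.mem_insert_of_mem h)
      -- the two interpretations
      set ω₁ : Finset U := d.erase p with hω₁_def
      set ω₂ : Finset U := insert p a with hω₂_def
      have hω₂K : ω₂ ∉ K := by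
        intro h
        have : ω₂ ⊆ z := Finset.insert_subset hpz haprop.2
        exact hpa (hmax ω₂ h this (Finset.mem_insert_self p a))
      have hcap : ω₁ ∩ ω₂ = a := by
        ext t
        simp only [hω₁_def, hω₂_def, Finset.mem_inter, Finset.mem_erase,
          Finset.mem_insert]
        constructor
        · rintro ⟨⟨htp, _⟩, (h | h)⟩
          · exact absurd h htp
          · exact h
        · intro ht
          exact ⟨⟨fun h => hpa (h ▸ ht), hdprop.2.2 ht⟩, Or.inr ht⟩
      have hcup : ω₁ ∪ ω₂ = d := by
        ext t
        simp only [hω₁_def, hω₂_def, Finset.mem_union, Finset.mem_erase,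
          Finset.mem_insert]
        constructor
        · rintro (⟨_, h⟩ | h | h)
          · exact h
          · exact h ▸ hdprop.2.1
          · exact hdprop.2.2 h
        · intro ht
          by_cases h : t = p
          · exact Or.inr (Or.inl h)
          · exact Or.inl ⟨h, ht⟩
      have hn12 : ¬ ω₁ ⊆ ω₂ := by
        intro h
        exact hqpa (h (Finset.mem_erase.mpr ⟨hqp, hqd⟩))
      have hn21 : ¬ ω₂ ⊆ ω₁ := by
        intro h
        have : p ∈ ω₁ := h (Finset.mem_insert_self p a)
        exact (Finset.mem_erase.mp this).1 rfl
      have hω₁cl : ω₁ ∈ oneCNFCl (↑K : Set (Finset U)) := by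
        refine betweenCl haprop.1 hdprop.1 ω₁ ?_ (Finset.erase_subset p d)
        exact Finset.subset_erase.mpr ⟨hdprop.2.2, hpa⟩
      have hω₂cl : ω₂ ∈ oneCNFCl (↑K : Set (Finset U)) := by
        refine betweenCl haprop.1 hy ω₂ (Finset.subset_insert p a) ?_
        exact Finset.insert_subset (hzy hpz) (haprop.2.trans hzy)
      refine ⟨ω₁, ω₂, hω₁cl, hω₂cl, hn12, hn21, ?_⟩
      by_cases hω₁K : ω₁ ∈ K
      · exact Or.inr (Or.inr (Or.inr (Or.inr
          ⟨hω₁K, hcap ▸ haprop.1, hcup ▸ hdprop.1, hω₂K⟩)))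
      · exact Or.inr (Or.inr (Or.inr (Or.inl
          ⟨hcap ▸ haprop.1, hcup ▸ hdprop.1, hω₁K, hω₂K⟩)))
    · push_neg at hUn
      obtain ⟨x, hx, y, hy, hxy⟩ := hUn
      have hn12 : ¬ x ⊆ y := by
        intro h
        exact hxy (by rwa [Finset.union_eq_right.mpr h])
      have hn21 : ¬ y ⊆ x := by
        intro h
        exact hxy (by rwa [Finset.union_eq_left.mpr h])
      refine ⟨x, y, memCl hx, memCl hy, hn12, hn21, ?_⟩
      by_cases hInt' : x ∩ y ∈ K
      · exact Or.inr (Or.inl ⟨hx, hy, hInt', hxy⟩)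
      · exact Or.inl ⟨hx, hy, hInt', hxy⟩
  · push_neg at hInt
    obtain ⟨x, hx, y, hy, hxy⟩ := hInt
    have hn12 : ¬ x ⊆ y := by
      intro h
      exact hxy (by rwa [Finset.inter_eq_left.mpr h])
    have hn21 : ¬ y ⊆ x := by
      intro h
      exact hxy (by rwa [Finset.inter_eq_right.mpr h])
    refine ⟨x, y, memCl hx, memCl hy, hn12, hn21, ?_⟩
    by_cases hUn' : x ∪ y ∈ K
    · exact Or.inr (Or.inr (Or.inl ⟨hx, hy, hUn', hxy⟩))
    · exact Or.inl ⟨hx, hy, hxy, hUn'⟩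
end

section
/- Let K be a knowledge base whose models are pairwise at the same positive distance e under distance d. Construct the profile E consisting of, for each model ω of K, a knowledge base with ω as its unique model. Then for any constraint μ whose models include mod(K) and such that every model of μ outside mod(K) is distinct from all models of K, the GMin-aggregated merging Δ^{d,GMin}_μ(E) has model set exactly mod(K). (Key step: every model of K has a GMin distance vector of the form (0, e, e, ..., e), and every non-model of K has a vector whose minimum entry is strictly positive, hence is strictly greater in the leximin order.) -/
/-- Distance from an interpretation to a knowledge base (minimum over models). -/
noncomputable def distToKB {U : Type*} [DecidableEq U] (d : Finset U → Finset U → ℕ)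
    (ω : Finset U) (M : Finset (Finset U)) : ℕ :=
  sInf {n : ℕ | ∃ τ ∈ M, n = d ω τ}

/-- The vector of distances of `ω` to the knowledge bases of the profile `E`. -/
noncomputable def distVec {U : Type*} [DecidableEq U] (d : Finset U → Finset U → ℕ)
    (E : List (Finset (Finset U))) (ω : Finset U) : List ℕ :=
  E.map (distToKB d ω)

/-- Leximin (GMin) comparison: sort increasingly and compare lexicographically. -/
def leximinLE (v w : List ℕ) : Prop :=
  Multiset.sort (v : Multiset ℕ) (· ≤ ·) = Multiset.sort (w : Multiset ℕ) (· ≤ ·) ∨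
    List.Lex (· < ·) (Multiset.sort (v : Multiset ℕ) (· ≤ ·))
      (Multiset.sort (w : Multiset ℕ) (· ≤ ·))

lemma distToKB_singleton {U : Type*} [DecidableEq U] (d : Finset U → Finset U → ℕ)
    (ω τ : Finset U) : distToKB d ω ({τ} : Finset (Finset U)) = d ω τ := by
  unfold distToKB
  have h : {n : ℕ | ∃ τ' ∈ ({τ} : Finset (Finset U)), n = d ω τ'} = {d ω τ} := by
    ext n; simp
  rw [h, csInf_singleton]

lemma sort_head_zero (s : Multiset ℕ) (hs : (0 : ℕ) ∈ s) :
    ∃ t, Multiset.sort s (· ≤ ·) = 0 :: t := by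
  rcases hlist : Multiset.sort s (· ≤ ·) with _ | ⟨a, t⟩
  · exfalso
    have := (Multiset.mem_sort (α := ℕ) (· ≤ ·)).2 hs
    rw [hlist] at this; simp at this
  · have hsorted := Multiset.pairwise_sort (α := ℕ) s (· ≤ ·)
    rw [hlist] at hsorted
    have h0 : (0 : ℕ) ∈ a :: t := by
      rw [← hlist]; exact (Multiset.mem_sort (α := ℕ) (· ≤ ·)).2 hs
    have ha : a = 0 := by
      rcases List.mem_cons.1 h0 with h' | h'
      · exact h'.symm
      · have := (List.pairwise_cons.1 hsorted).1 0 h'; omega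
    exact ⟨t, by rw [← ha]; try exact hlist⟩

lemma sort_head_pos (s : Multiset ℕ) (hne : s ≠ 0) (hpos : ∀ b ∈ s, 0 < b) :
    ∃ a t, Multiset.sort s (· ≤ ·) = a :: t ∧ 0 < a := by
  rcases hlist : Multiset.sort s (· ≤ ·) with _ | ⟨a, t⟩
  · exfalso
    apply hne
    have := Multiset.sort_eq (α := ℕ) s (· ≤ ·)
    rw [hlist] at this
    simpa using this.symm
  · refine ⟨a, t, rfl, ?_⟩
    apply hpos
    have : a ∈ Multiset.sort (α := ℕ) s (· ≤ ·) := by rw [hlist]; simp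
    exact (Multiset.mem_sort (α := ℕ) (· ≤ ·)).1 this

theorem stmt_9 {U : Type*} [DecidableEq U] [Fintype U]
    (d : Finset U → Finset U → ℕ)
    (hd0 : ∀ x y, d x y = 0 ↔ x = y)
    (hdsymm : ∀ x y, d x y = d y x)
    (hdtri : ∀ x y z, d x z ≤ d x y + d y z)
    (K : Finset (Finset U)) (hK : K.Nonempty)
    (e : ℕ) (he : 0 < e)
    (hpair : ∀ x ∈ K, ∀ y ∈ K, x ≠ y → d x y = e)
    (μ : Finset (Finset U)) (hKμ : K ⊆ μ)
    (hdistinct : ∀ ω ∈ μ, ω ∉ K → ∀ ω' ∈ K, ω ≠ ω')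
    (E : List (Finset (Finset U)))
    (hE : E = K.toList.map (fun ω => ({ω} : Finset (Finset U)))) :
    {ω : Finset U | ω ∈ μ ∧ ∀ ω' ∈ μ, leximinLE (distVec d E ω) (distVec d E ω')} =
      (↑K : Set (Finset U)) := by
  -- the distance vector as a multiset
  have hvec : ∀ ω : Finset U, ((distVec d E ω : List ℕ) : Multiset ℕ) = K.val.map (d ω) := by
    intro ω
    rw [hE]
    show ((List.map (fun M => distToKB d ω M)
      (K.toList.map (fun τ => ({τ} : Finset (Finset U)))) : List ℕ) : Multiset ℕ) = _
    rw [List.map_map]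
    have : ((K.toList.map ((fun M => distToKB d ω M) ∘
        (fun τ => ({τ} : Finset (Finset U)))) : List ℕ) : Multiset ℕ)
        = Multiset.map (fun τ => distToKB d ω ({τ} : Finset (Finset U))) (K.toList : Multiset _) := by
      rw [← Multiset.map_coe]
      rfl
    rw [this, Finset.coe_toList]
    apply Multiset.map_congr rfl
    intro τ _
    exact distToKB_singleton d ω τ
  -- for a model of K, the multiset is 0 ::ₘ replicate (card-1) e
  have hmodel : ∀ ω ∈ K, K.val.map (d ω) = 0 ::ₘ Multiset.replicate (K.card - 1) e := by
    intro ω hω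
    have hval : ω ::ₘ K.val.erase ω = K.val := Multiset.cons_erase (by exact hω)
    rw [← hval, Multiset.map_cons, (hd0 ω ω).2 rfl]
    congr 1
    rw [Multiset.eq_replicate]
    constructor
    · rw [Multiset.card_map, Multiset.card_erase_of_mem (by exact hω)]
      rfl
    · intro b hb
      obtain ⟨τ, hτ, hb⟩ := Multiset.mem_map.1 hb
      have hτK : τ ∈ K := Multiset.mem_of_mem_erase hτ
      have hτω : τ ≠ ω := ((K.nodup.mem_erase_iff).1 hτ).1
      rw [← hb]
      exact hpair ω hω τ hτK (fun h => hτω h.symm)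
  -- for a non-model, all entries are positive
  have hposall : ∀ ω ∈ μ, ω ∉ K → ∀ b ∈ K.val.map (d ω), 0 < b := by
    intro ω hωμ hωK b hb
    obtain ⟨τ, hτ, hb⟩ := Multiset.mem_map.1 hb
    have : d ω τ ≠ 0 := fun h => hdistinct ω hωμ hωK τ hτ ((hd0 ω τ).1 h)
    omega
  have hcardpos : 0 < K.card := Finset.card_pos.2 hK
  ext ω
  simp only [Set.mem_setOf_eq, Finset.mem_coe]
  constructor
  · rintro ⟨hωμ, hmin⟩
    by_contra hωK
    obtain ⟨ω₀, hω₀⟩ := hK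
    have h := hmin ω₀ (hKμ hω₀)
    obtain ⟨a, t, hat, ha⟩ := sort_head_pos ((distVec d E ω : List ℕ) : Multiset ℕ)
      (by
        rw [hvec]
        intro h
        have hc := congrArg Multiset.card h
        rw [Multiset.card_map, Multiset.card_zero] at hc
        have : K.card = 0 := hc
        omega)
      (by rw [hvec]; exact hposall ω hωμ hωK)
    obtain ⟨t₀, ht₀⟩ := sort_head_zero ((distVec d E ω₀ : List ℕ) : Multiset ℕ)
      (by rw [hvec, hmodel ω₀ hω₀]; simp)
    rcases h with h | h
    · rw [hat, ht₀] at h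
      injection h with h1 _
      omega
    · rw [hat, ht₀] at h
      cases h with
      | rel h' => omega
      | cons h' => omega
  · intro hωK
    refine ⟨hKμ hωK, fun ω' hω'μ => ?_⟩
    by_cases hω'K : ω' ∈ K
    · left
      congr 1
      rw [hvec, hvec, hmodel ω hωK, hmodel ω' hω'K]
    · right
      obtain ⟨t, ht⟩ := sort_head_zero ((distVec d E ω : List ℕ) : Multiset ℕ)
        (by rw [hvec, hmodel ω hωK]; simp)
      obtain ⟨a, t', hat, ha⟩ := sort_head_pos ((distVec d E ω' : List ℕ) : Multiset ℕ)
        (by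
          rw [hvec]
          intro h
          have hc := congrArg Multiset.card h
          rw [Multiset.card_map, Multiset.card_zero] at hc
          have : K.card = 0 := hc
          omega)
        (by rw [hvec]; exact hposall ω' hω'μ hω'K)
      rw [ht, hat]
      exact List.Lex.rel ha
end

section
/- Let mod(K) = {ω₁,...,ωₙ} be interpretations over alphabet U, let A = {a₁,...,aₙ} be n fresh atoms disjoint from U, and define ωᵢ' = ωᵢ ∪ (A \ {aᵢ}). Then for all distinct i, j, k, the ternary majority maj₃(ωᵢ', ωⱼ', ωₖ') contains all of A; more generally, every element of the Krom closure (closure under maj₃) of {ω₁',...,ωₙ'} other than the ωᵢ' themselves contains all of A. -/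
def maj3 {U : Type*} [DecidableEq U] (x y z : Finset U) : Finset U :=
  (x ∩ y) ∪ (x ∩ z) ∪ (y ∩ z)

def kromClosedSet {U : Type*} [DecidableEq U] (S : Set (Finset U)) : Prop :=
  ∀ x ∈ S, ∀ y ∈ S, ∀ z ∈ S, maj3 x y z ∈ S

/-- The Krom closure: the smallest superset closed under ternary majority. -/
def kromCl {U : Type*} [DecidableEq U] (M : Set (Finset U)) : Set (Finset U) :=
  ⋂₀ {S : Set (Finset U) | M ⊆ S ∧ kromClosedSet S}

lemma maj3_left {U : Type*} [DecidableEq U] (x z : Finset U) : maj3 x x z = x := by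
  ext w; simp [maj3]; tauto

lemma maj3_mid {U : Type*} [DecidableEq U] (x y : Finset U) : maj3 x y x = x := by
  ext w; simp [maj3]; tauto

lemma maj3_right {U : Type*} [DecidableEq U] (x y : Finset U) : maj3 x y y = y := by
  ext w; simp [maj3]

theorem stmt_11 {W : Type*} [DecidableEq W] {n : ℕ}
    (a : Fin n → W) (ha : Function.Injective a)
    (A : Finset W) (hA : A = Finset.image a Finset.univ)
    (ω : Fin n → Finset W) (hω : Function.Injective ω)
    (hdisj : ∀ i, Disjoint (ω i) A)
    (ω' : Fin n → Finset W) (hω' : ∀ i, ω' i = ω i ∪ A.erase (a i)) :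
    (∀ i j k : Fin n, i ≠ j → i ≠ k → j ≠ k →
        A ⊆ maj3 (ω' i) (ω' j) (ω' k)) ∧
    (∀ τ ∈ kromCl (Set.range ω'), τ ∉ Set.range ω' → A ⊆ τ) := by
  have hmemA : ∀ m, a m ∈ A := fun m => by simp [hA]
  have hmem : ∀ m l, a m ∈ ω' l ↔ m ≠ l := by
    intro m l
    rw [hω']
    simp only [Finset.mem_union, Finset.mem_erase]
    constructor
    · rintro (h | ⟨h, -⟩)
      · exact absurd (hmemA m) (Finset.disjoint_left.mp (hdisj l) h)
      · exact fun e => h (by rw [e])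
    · intro h
      exact Or.inr ⟨fun e => h (ha e), hmemA m⟩
  constructor
  · intro i j k hij hik hjk w hw
    rw [hA] at hw
    obtain ⟨m, -, rfl⟩ := Finset.mem_image.mp hw
    by_cases hmi : m = i
    · have h1 : a m ∈ ω' j := (hmem m j).mpr (hmi ▸ hij)
      have h2 : a m ∈ ω' k := (hmem m k).mpr (hmi ▸ hik)
      simp [maj3, h1, h2]
    · have h1 : a m ∈ ω' i := (hmem m i).mpr hmi
      by_cases hmj : m = j
      · have h2 : a m ∈ ω' k := (hmem m k).mpr (hmj ▸ hjk)
        simp [maj3, h1, h2]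
      · have h2 : a m ∈ ω' j := (hmem m j).mpr hmj
        simp [maj3, h1, h2]
  · intro τ hτ hnot
    set S : Set (Finset W) := {σ | σ ∈ Set.range ω' ∨ A ⊆ σ} with hSdef
    have hclosed : kromClosedSet S := by
      intro x hx y hy z hz
      by_cases hxy : x = y
      · subst hxy; rw [maj3_left]; exact hx
      by_cases hxz : x = z
      · subst hxz; rw [maj3_mid]; exact hx
      by_cases hyz : y = z
      · subst hyz; rw [maj3_right]; exact hy
      refine Or.inr ?_
      intro w hw
      rw [hA] at hw
      obtain ⟨m, -, rfl⟩ := Finset.mem_image.mp hw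
      have key : ∀ σ ∈ S, a m ∉ σ → σ = ω' m := by
        intro σ hσ hmσ
        rcases hσ with ⟨l, rfl⟩ | hAσ
        · have := (hmem m l).not_left.mp hmσ
          rw [this]
        · exact absurd (hAσ (hmemA m)) hmσ
      by_cases h1 : a m ∈ x
      · by_cases h2 : a m ∈ y
        · simp [maj3, h1, h2]
        · by_cases h3 : a m ∈ z
          · simp [maj3, h1, h3]
          · exact absurd ((key y hy h2).trans (key z hz h3).symm) hyz
      · by_cases h2 : a m ∈ y
        · by_cases h3 : a m ∈ z
          · simp [maj3, h2, h3]
          · exact absurd ((key x hx h1).trans (key z hz h3).symm) hxz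
        · exact absurd ((key x hx h1).trans (key y hy h2).symm) hxy
    have hS : τ ∈ S := hτ S ⟨fun σ h => Or.inl h, hclosed⟩
    rcases hS with h | h
    · exact absurd h hnot
    · exact h
end

section
/- Let ω₁, ω₂ be incomparable finite sets with d₁ = |ω₁ \ ω₂| ≤ d₂ = |ω₂ \ ω₁| and d₁ > 0. Let ω₁⁺ = ω₁ ∪ T where T ⊆ ω₂ \ ω₁ with |T| = d₁, and let M' = {ω₁⁺, ω₁ ∪ ω₂}. Then among the three interpretations {ω₁, ω₂, ω₁ ∩ ω₂}: H(ω₁, M') = d₁, H(ω₂, M') = d₁, and H(ω₁ ∩ ω₂, M') > d₁. Consequently the Hamming-minimal interpretations among {ω₁, ω₂, ω₁ ∩ ω₂} relative to M' are exactly {ω₁, ω₂}. -/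
lemma dist_pair {U : Type*} [DecidableEq U] (ω a b : Finset U) :
    distToSet ω ({a, b} : Set (Finset U)) = min (hamming ω a) (hamming ω b) := by
  unfold distToSet
  apply le_antisymm
  · rcases le_total (hamming ω a) (hamming ω b) with h | h
    · rw [min_eq_left h]; exact Nat.sInf_le ⟨a, by simp, rfl⟩
    · rw [min_eq_right h]; exact Nat.sInf_le ⟨b, by simp, rfl⟩
  · have hne : (hamming ω a) ∈ {n : ℕ | ∃ τ ∈ ({a, b} : Set (Finset U)), n = hamming ω τ} :=
      ⟨a, by simp, rfl⟩
    obtain ⟨τ, hτ, heq⟩ := Nat.sInf_mem ⟨_, hne⟩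
    rcases hτ with h | h <;> subst h <;> rw [heq]
    · exact min_le_left _ _
    · exact min_le_right _ _

lemma hamming_of_subset {U : Type*} [DecidableEq U] {s t : Finset U} (h : s ⊆ t) :
    hamming s t = (t \ s).card := by
  unfold hamming
  rw [Finset.sdiff_eq_empty_iff_subset.mpr h, Finset.empty_union]

theorem stmt_15 {U : Type*} [DecidableEq U] [Fintype U]
    (ω₁ ω₂ : Finset U) (h1 : ¬ ω₁ ⊆ ω₂) (h2 : ¬ ω₂ ⊆ ω₁)
    (d₁ d₂ : ℕ) (hd₁ : d₁ = (ω₁ \ ω₂).card) (hd₂ : d₂ = (ω₂ \ ω₁).card)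
    (hle : d₁ ≤ d₂) (hpos : 0 < d₁)
    (T : Finset U) (hT : T ⊆ ω₂ \ ω₁) (hTcard : T.card = d₁) :
    distToSet ω₁ ({ω₁ ∪ T, ω₁ ∪ ω₂} : Set (Finset U)) = d₁ ∧
    distToSet ω₂ ({ω₁ ∪ T, ω₁ ∪ ω₂} : Set (Finset U)) = d₁ ∧
    d₁ < distToSet (ω₁ ∩ ω₂) ({ω₁ ∪ T, ω₁ ∪ ω₂} : Set (Finset U)) ∧
    {σ : Finset U | σ ∈ ({ω₁, ω₂, ω₁ ∩ ω₂} : Set (Finset U)) ∧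
        ∀ σ' ∈ ({ω₁, ω₂, ω₁ ∩ ω₂} : Set (Finset U)),
          distToSet σ ({ω₁ ∪ T, ω₁ ∪ ω₂} : Set (Finset U)) ≤
            distToSet σ' ({ω₁ ∪ T, ω₁ ∪ ω₂} : Set (Finset U))} =
      ({ω₁, ω₂} : Set (Finset U)) := by
  have hT2 : T ⊆ ω₂ := hT.trans (Finset.sdiff_subset)
  have hT1 : ∀ x ∈ T, x ∉ ω₁ := fun x hx => (Finset.mem_sdiff.mp (hT hx)).2
  -- hamming ω₁ (ω₁ ∪ T) = d₁
  have hA : hamming ω₁ (ω₁ ∪ T) = d₁ := by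
    rw [hamming_of_subset Finset.subset_union_left]
    rw [Finset.union_sdiff_left,
      Finset.sdiff_eq_self_iff_disjoint.mpr (Finset.disjoint_left.mpr hT1), hTcard]
  -- hamming ω₁ (ω₁ ∪ ω₂) = d₂
  have hB : hamming ω₁ (ω₁ ∪ ω₂) = d₂ := by
    rw [hamming_of_subset Finset.subset_union_left, Finset.union_sdiff_left, hd₂]
  -- hamming ω₂ (ω₁ ∪ ω₂) = d₁
  have hC : hamming ω₂ (ω₁ ∪ ω₂) = d₁ := by
    rw [hamming_of_subset Finset.subset_union_right, Finset.union_sdiff_right, hd₁]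
  -- hamming ω₂ (ω₁ ∪ T) ≥ d₁
  have hD : d₁ ≤ hamming ω₂ (ω₁ ∪ T) := by
    have hsub : ω₁ \ ω₂ ⊆ ω₂ \ (ω₁ ∪ T) ∪ (ω₁ ∪ T) \ ω₂ := by
      intro x hx
      rcases Finset.mem_sdiff.mp hx with ⟨hx1, hx2⟩
      exact Finset.mem_union_right _ (Finset.mem_sdiff.mpr ⟨Finset.mem_union_left _ hx1, hx2⟩)
    calc d₁ = (ω₁ \ ω₂).card := hd₁
      _ ≤ _ := Finset.card_le_card hsub
  -- hamming (ω₁ ∩ ω₂) (ω₁ ∪ T) ≥ 2*d₁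
  have hsub1 : ω₁ ∩ ω₂ ⊆ ω₁ ∪ T := fun x hx =>
    Finset.mem_union_left _ (Finset.mem_inter.mp hx).1
  have hsub2 : ω₁ ∩ ω₂ ⊆ ω₁ ∪ ω₂ := fun x hx =>
    Finset.mem_union_left _ (Finset.mem_inter.mp hx).1
  have hdisj : Disjoint (ω₁ \ ω₂) T := by
    rw [Finset.disjoint_left]
    intro x hx hxT
    exact (Finset.mem_sdiff.mp hx).2 (Finset.mem_sdiff.mp (hT hxT)).1
  have hE : d₁ + d₁ ≤ hamming (ω₁ ∩ ω₂) (ω₁ ∪ T) := by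
    rw [hamming_of_subset hsub1]
    have hsub : (ω₁ \ ω₂) ∪ T ⊆ (ω₁ ∪ T) \ (ω₁ ∩ ω₂) := by
      intro x hx
      rcases Finset.mem_union.mp hx with h | h
      · rcases Finset.mem_sdiff.mp h with ⟨hx1, hx2⟩
        exact Finset.mem_sdiff.mpr ⟨Finset.mem_union_left _ hx1,
          fun hc => hx2 (Finset.mem_inter.mp hc).2⟩
      · exact Finset.mem_sdiff.mpr ⟨Finset.mem_union_right _ h,
          fun hc => hT1 x h (Finset.mem_inter.mp hc).1⟩
    calc d₁ + d₁ = ((ω₁ \ ω₂) ∪ T).card := by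
          rw [Finset.card_union_of_disjoint hdisj, hTcard, ← hd₁]
      _ ≤ _ := Finset.card_le_card hsub
  have hF : d₁ + d₁ ≤ hamming (ω₁ ∩ ω₂) (ω₁ ∪ ω₂) := by
    rw [hamming_of_subset hsub2]
    have hdisj2 : Disjoint (ω₁ \ ω₂) (ω₂ \ ω₁) := by
      rw [Finset.disjoint_left]
      intro x hx hx'
      exact (Finset.mem_sdiff.mp hx').2 (Finset.mem_sdiff.mp hx).1
    have hsub : (ω₁ \ ω₂) ∪ (ω₂ \ ω₁) ⊆ (ω₁ ∪ ω₂) \ (ω₁ ∩ ω₂) := by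
      intro x hx
      rcases Finset.mem_union.mp hx with h | h <;> rcases Finset.mem_sdiff.mp h with ⟨hx1, hx2⟩
      · exact Finset.mem_sdiff.mpr ⟨Finset.mem_union_left _ hx1,
          fun hc => hx2 (Finset.mem_inter.mp hc).2⟩
      · exact Finset.mem_sdiff.mpr ⟨Finset.mem_union_right _ hx1,
          fun hc => hx2 (Finset.mem_inter.mp hc).1⟩
    calc d₁ + d₁ ≤ d₁ + d₂ := by omega
      _ = ((ω₁ \ ω₂) ∪ (ω₂ \ ω₁)).card := by
          rw [Finset.card_union_of_disjoint hdisj2, ← hd₁, ← hd₂]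
      _ ≤ _ := Finset.card_le_card hsub
  have e1 : distToSet ω₁ ({ω₁ ∪ T, ω₁ ∪ ω₂} : Set (Finset U)) = d₁ := by
    rw [dist_pair, hA, hB]; omega
  have e2 : distToSet ω₂ ({ω₁ ∪ T, ω₁ ∪ ω₂} : Set (Finset U)) = d₁ := by
    rw [dist_pair, hC]; omega
  have e3 : d₁ < distToSet (ω₁ ∩ ω₂) ({ω₁ ∪ T, ω₁ ∪ ω₂} : Set (Finset U)) := by
    rw [dist_pair]; omega
  refine ⟨e1, e2, e3, ?_⟩
  have hne1 : ω₁ ∩ ω₂ ≠ ω₁ := fun h => h1 (fun x hx => (Finset.mem_inter.mp (h ▸ hx)).2)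
  have hne2 : ω₁ ∩ ω₂ ≠ ω₂ := fun h => h2 (fun x hx => (Finset.mem_inter.mp (h ▸ hx)).1)
  ext σ
  simp only [Set.mem_setOf_eq, Set.mem_insert_iff, Set.mem_singleton_iff]
  constructor
  · rintro ⟨hσ | hσ | hσ, hmin⟩
    · exact Or.inl hσ
    · exact Or.inr hσ
    · exfalso
      have := hmin ω₁ (Or.inl rfl)
      rw [hσ, e1] at this
      omega
  · rintro (rfl | rfl) <;>
    · refine ⟨by tauto, ?_⟩
      rintro σ' (rfl | rfl | rfl) <;> simp only [e1, e2] <;> omega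
end

section
/- Every knowledge base K with exactly two models is Horn-simplifiable with respect to Hamming-distance revision: there exist a Horn-closed (intersection-closed) set M' and a Horn-closed constraint set S ⊇ mod(K) such that the elements of S at minimal Hamming distance to M' are exactly the two models of K. -/
def hornClosedSet {U : Type*} [DecidableEq U] (S : Set (Finset U)) : Prop :=
  ∀ x ∈ S, ∀ y ∈ S, x ∩ y ∈ S

lemma hamming_eq {U : Type*} [DecidableEq U] (s t : Finset U) :
    hamming s t = (s \ t).card + (t \ s).card := by
  unfold hamming
  rw [Finset.card_union_of_disjoint disjoint_sdiff_sdiff]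

lemma hamming_self {U : Type*} [DecidableEq U] (s : Finset U) : hamming s s = 0 := by
  simp [hamming]

lemma distToSet_pair {U : Type*} [DecidableEq U] (ω a b : Finset U) :
    distToSet ω {a, b} = min (hamming ω a) (hamming ω b) := by
  unfold distToSet
  have hset : {n : ℕ | ∃ τ ∈ ({a, b} : Set (Finset U)), n = hamming ω τ} =
      ({hamming ω a, hamming ω b} : Set ℕ) := by
    ext n
    constructor
    · rintro ⟨τ, hτ, rfl⟩
      rcases hτ with rfl | rfl
      · exact Or.inl rfl
      · exact Or.inr rfl
    · rintro (rfl | rfl)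
      · exact ⟨a, Or.inl rfl, rfl⟩
      · exact ⟨b, Or.inr rfl, rfl⟩
  rw [hset, csInf_pair]

lemma horn_three {U : Type*} [DecidableEq U] (a b : Finset U) :
    hornClosedSet ({a, b, a ∩ b} : Set (Finset U)) := by
  intro x hx y hy
  simp only [Set.mem_insert_iff, Set.mem_singleton_iff] at hx hy ⊢
  rcases hx with rfl | rfl | rfl <;> rcases hy with rfl | rfl | rfl <;>
    first
      | (left; ext z; simp only [Finset.mem_inter]; all_goals tauto)
      | (right; left; ext z; simp only [Finset.mem_inter]; all_goals tauto)
      | (right; right; ext z; simp only [Finset.mem_inter]; all_goals tauto)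

lemma incomp_case {U : Type*} [DecidableEq U] (ω₁ ω₂ : Finset U)
    (h1 : ¬ ω₁ ⊆ ω₂) (h2 : ¬ ω₂ ⊆ ω₁)
    (hle : (ω₁ \ ω₂).card ≤ (ω₂ \ ω₁).card) :
    ∃ M' S : Set (Finset U),
      M'.Nonempty ∧ hornClosedSet M' ∧ hornClosedSet S ∧
      ({ω₁, ω₂} : Set (Finset U)) ⊆ S ∧
      {σ : Finset U | σ ∈ S ∧ ∀ σ' ∈ S, distToSet σ M' ≤ distToSet σ' M'} =
        ({ω₁, ω₂} : Set (Finset U)) := by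
  set d₁ := (ω₁ \ ω₂).card with hd₁
  set d₂ := (ω₂ \ ω₁).card with hd₂
  obtain ⟨T, hTB, hTcard⟩ := Finset.exists_subset_card_eq hle
  have hd₁pos : 1 ≤ d₁ := by
    rw [hd₁, Nat.one_le_iff_ne_zero, Ne, Finset.card_eq_zero,
      Finset.sdiff_eq_empty_iff_subset]
    exact h1
  have hTdisj : Disjoint T ω₁ :=
    Finset.disjoint_left.mpr fun x hx => (Finset.mem_sdiff.mp (hTB hx)).2
  have hTsub₂ : T ⊆ ω₂ := hTB.trans Finset.sdiff_subset
  refine ⟨{ω₁ ∪ T, ω₁ ∪ ω₂}, {ω₁, ω₂, ω₁ ∩ ω₂}, ⟨ω₁ ∪ T, Or.inl rfl⟩, ?_, horn_three ω₁ ω₂,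
    ?_, ?_⟩
  · -- hornClosedSet M'
    have hsub : ω₁ ∪ T ⊆ ω₁ ∪ ω₂ := Finset.union_subset_union_right hTsub₂
    intro x hx y hy
    simp only [Set.mem_insert_iff, Set.mem_singleton_iff] at hx hy ⊢
    rcases hx with rfl | rfl <;> rcases hy with rfl | rfl <;>
      first
        | (left; ext z; have hz := @hsub z; simp only [Finset.mem_inter] at *; all_goals tauto)
        | (right; ext z; have hz := @hsub z; simp only [Finset.mem_inter] at *; all_goals tauto)
  · intro x hx
    rcases hx with rfl | hx
    · exact Or.inl rfl
    · exact Or.inr (Or.inl hx)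
  · -- the main distance computation
    have e1 : ω₁ \ (ω₁ ∪ T) = ∅ := by
      rw [Finset.sdiff_eq_empty_iff_subset]; exact Finset.subset_union_left
    have e2 : (ω₁ ∪ T) \ ω₁ = T := by
      ext x
      simp only [Finset.mem_sdiff, Finset.mem_union]
      constructor
      · rintro ⟨hx1 | hx1, hx2⟩
        · exact absurd hx1 hx2
        · exact hx1
      · intro hx
        exact ⟨Or.inr hx, fun hc => Finset.disjoint_left.mp hTdisj hx hc⟩
    have e3 : ω₁ \ (ω₁ ∪ ω₂) = ∅ := by
      rw [Finset.sdiff_eq_empty_iff_subset]; exact Finset.subset_union_left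
    have e4 : (ω₁ ∪ ω₂) \ ω₁ = ω₂ \ ω₁ := by
      ext x; simp only [Finset.mem_sdiff, Finset.mem_union]; tauto
    have e5 : ω₂ \ (ω₁ ∪ ω₂) = ∅ := by
      rw [Finset.sdiff_eq_empty_iff_subset]; exact Finset.subset_union_right
    have e6 : (ω₁ ∪ ω₂) \ ω₂ = ω₁ \ ω₂ := by
      ext x; simp only [Finset.mem_sdiff, Finset.mem_union]; tauto
    have e7 : ω₂ \ (ω₁ ∪ T) = (ω₂ \ ω₁) \ T := by
      ext x; simp only [Finset.mem_sdiff, Finset.mem_union]; tauto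
    have e8 : (ω₁ ∪ T) \ ω₂ = ω₁ \ ω₂ := by
      ext x
      simp only [Finset.mem_sdiff, Finset.mem_union]
      constructor
      · rintro ⟨hx1 | hx1, hx2⟩
        · exact ⟨hx1, hx2⟩
        · exact absurd (hTsub₂ hx1) hx2
      · rintro ⟨hx1, hx2⟩; exact ⟨Or.inl hx1, hx2⟩
    have e9 : (ω₁ ∩ ω₂) \ (ω₁ ∪ T) = ∅ := by
      rw [Finset.sdiff_eq_empty_iff_subset]
      exact Finset.inter_subset_left.trans Finset.subset_union_left
    have e10 : (ω₁ ∪ T) \ (ω₁ ∩ ω₂) = (ω₁ \ ω₂) ∪ T := by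
      ext x
      simp only [Finset.mem_sdiff, Finset.mem_union, Finset.mem_inter]
      constructor
      · rintro ⟨hx1 | hx1, hx2⟩
        · by_cases hx2' : x ∈ ω₂
          · exact absurd ⟨hx1, hx2'⟩ hx2
          · exact Or.inl ⟨hx1, hx2'⟩
        · exact Or.inr hx1
      · rintro (⟨hx1, hx2⟩ | hx1)
        · exact ⟨Or.inl hx1, fun hc => hx2 hc.2⟩
        · exact ⟨Or.inr hx1, fun hc => Finset.disjoint_left.mp hTdisj hx1 hc.1⟩
    have e11 : (ω₁ ∩ ω₂) \ (ω₁ ∪ ω₂) = ∅ := by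
      rw [Finset.sdiff_eq_empty_iff_subset]
      exact Finset.inter_subset_left.trans Finset.subset_union_left
    have e12 : (ω₁ ∪ ω₂) \ (ω₁ ∩ ω₂) = (ω₁ \ ω₂) ∪ (ω₂ \ ω₁) := by
      ext x
      simp only [Finset.mem_sdiff, Finset.mem_union, Finset.mem_inter]
      tauto
    have hdisjAT : Disjoint (ω₁ \ ω₂) T :=
      Finset.disjoint_left.mpr fun x hx hc => (Finset.mem_sdiff.mp hx).2 (hTsub₂ hc)
    have hdisjAB : Disjoint (ω₁ \ ω₂) (ω₂ \ ω₁) := disjoint_sdiff_sdiff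
    have h1a : hamming ω₁ (ω₁ ∪ T) = d₁ := by
      rw [hamming_eq, e1, e2, hTcard]; simp
    have h1b : hamming ω₁ (ω₁ ∪ ω₂) = d₂ := by
      rw [hamming_eq, e3, e4, ← hd₂]; simp
    have h2a : hamming ω₂ (ω₁ ∪ T) = d₂ := by
      rw [hamming_eq, e7, e8, Finset.card_sdiff_of_subset hTB, hTcard, ← hd₁, ← hd₂]
      omega
    have h2b : hamming ω₂ (ω₁ ∪ ω₂) = d₁ := by
      rw [hamming_eq, e5, e6, ← hd₁]; simp
    have hCa : hamming (ω₁ ∩ ω₂) (ω₁ ∪ T) = d₁ + d₁ := by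
      rw [hamming_eq, e9, e10, Finset.card_union_of_disjoint hdisjAT, hTcard, ← hd₁]
      simp
    have hCb : hamming (ω₁ ∩ ω₂) (ω₁ ∪ ω₂) = d₁ + d₂ := by
      rw [hamming_eq, e11, e12, Finset.card_union_of_disjoint hdisjAB, ← hd₁, ← hd₂]
      simp
    have dω₁ : distToSet ω₁ {ω₁ ∪ T, ω₁ ∪ ω₂} = d₁ := by
      rw [distToSet_pair, h1a, h1b]
      exact min_eq_left hle
    have dω₂ : distToSet ω₂ {ω₁ ∪ T, ω₁ ∪ ω₂} = d₁ := by
      rw [distToSet_pair, h2a, h2b]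
      exact min_eq_right hle
    have dC : d₁ < distToSet (ω₁ ∩ ω₂) {ω₁ ∪ T, ω₁ ∪ ω₂} := by
      rw [distToSet_pair, hCa, hCb]
      exact lt_min (by omega) (by omega)
    ext σ
    simp only [Set.mem_setOf_eq, Set.mem_insert_iff, Set.mem_singleton_iff]
    constructor
    · rintro ⟨hσS, hmin⟩
      rcases hσS with rfl | rfl | rfl
      · exact Or.inl rfl
      · exact Or.inr rfl
      · exfalso
        have hm := hmin ω₁ (Or.inl rfl)
        rw [dω₁] at hm
        exact absurd hm (not_le.mpr dC)
    · rintro (rfl | rfl)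
      · refine ⟨Or.inl rfl, ?_⟩
        rintro σ' (rfl | rfl | rfl)
        · exact le_refl _
        · rw [dω₁, dω₂]
        · rw [dω₁]; exact le_of_lt dC
      · refine ⟨Or.inr (Or.inl rfl), ?_⟩
        rintro σ' (rfl | rfl | rfl)
        · rw [dω₂, dω₁]
        · exact le_refl _
        · rw [dω₂]; exact le_of_lt dC

lemma comp_case {U : Type*} [DecidableEq U] (ω₁ ω₂ : Finset U) (h1 : ω₁ ⊆ ω₂) :
    ∃ M' S : Set (Finset U),
      M'.Nonempty ∧ hornClosedSet M' ∧ hornClosedSet S ∧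
      ({ω₁, ω₂} : Set (Finset U)) ⊆ S ∧
      {σ : Finset U | σ ∈ S ∧ ∀ σ' ∈ S, distToSet σ M' ≤ distToSet σ' M'} =
        ({ω₁, ω₂} : Set (Finset U)) := by
  have hc : hornClosedSet ({ω₁, ω₂} : Set (Finset U)) := by
    intro x hx y hy
    simp only [Set.mem_insert_iff, Set.mem_singleton_iff] at hx hy ⊢
    rcases hx with rfl | rfl <;> rcases hy with rfl | rfl <;>
      first
        | (left; ext z; have hz := @h1 z; simp only [Finset.mem_inter] at *; all_goals tauto)
        | (right; ext z; have hz := @h1 z; simp only [Finset.mem_inter] at *; all_goals tauto)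
  refine ⟨{ω₁, ω₂}, {ω₁, ω₂}, ⟨ω₁, Or.inl rfl⟩, hc, hc, subset_rfl, ?_⟩
  ext σ
  simp only [Set.mem_setOf_eq, Set.mem_insert_iff, Set.mem_singleton_iff]
  constructor
  · rintro ⟨hσS, _⟩; exact hσS
  · intro hσ
    refine ⟨hσ, fun σ' _ => ?_⟩
    have hz : distToSet σ {ω₁, ω₂} = 0 := by
      rcases hσ with rfl | rfl
      · rw [distToSet_pair, hamming_self]
        exact Nat.zero_min _
      · rw [distToSet_pair]
        rw [hamming_self]
        exact Nat.min_zero _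
    rw [hz]
    exact Nat.zero_le _

theorem stmt_16 {U : Type*} [DecidableEq U] [Fintype U]
    (ω₁ ω₂ : Finset U) (h : ω₁ ≠ ω₂) :
    ∃ M' S : Set (Finset U),
      M'.Nonempty ∧ hornClosedSet M' ∧ hornClosedSet S ∧
      ({ω₁, ω₂} : Set (Finset U)) ⊆ S ∧
      {σ : Finset U | σ ∈ S ∧ ∀ σ' ∈ S, distToSet σ M' ≤ distToSet σ' M'} =
        ({ω₁, ω₂} : Set (Finset U)) := by
  by_cases h1 : ω₁ ⊆ ω₂
  · exact comp_case ω₁ ω₂ h1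
  · by_cases h2 : ω₂ ⊆ ω₁
    · have := comp_case ω₂ ω₁ h2
      rwa [Set.pair_comm ω₂ ω₁] at this
    · by_cases hle : (ω₁ \ ω₂).card ≤ (ω₂ \ ω₁).card
      · exact incomp_case ω₁ ω₂ h1 h2 hle
      · have := incomp_case ω₂ ω₁ h2 h1 (le_of_not_ge hle)
        rwa [Set.pair_comm ω₂ ω₁] at this
end

section
/- For drastic distance D, a knowledge base K is L'-simplifiable (i.e., there exist an L'-closed set of models M' and L'-closed constraint S with the D-minimal elements of S relative to M' being exactly mod(K)) if and only if mod(K) is L'-closed (K is L'-expressible). Specifically, if mod(K) is not closed under Cl, then for any M' with mod(K) ⊆ M' that is Cl-closed, the set of elements of Cl(mod(K)) at drastic distance 0 to M' strictly contains mod(K). -/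
/-- Drastic distance from an interpretation to a set of interpretations. -/
noncomputable def drasticToSet {U : Type*} [DecidableEq U] (ω : Finset U) (M : Set (Finset U)) : ℕ :=
  sInf {n : ℕ | ∃ τ ∈ M, n = if ω = τ then 0 else 1}

/-- `K` is L'-simplifiable w.r.t. the drastic-distance revision: there are a
Cl-closed model set `M'` and a Cl-closed constraint `S ⊇ mod(K)` whose
drastic-minimal elements are exactly the models of `K`. -/
def drasticSimplifiable {U : Type*} [DecidableEq U]
    (Cl : Set (Finset U) → Set (Finset U)) (K : Finset (Finset U)) : Prop :=
  ∃ M' S : Set (Finset U), Cl M' = M' ∧ Cl S = S ∧ (↑K : Set (Finset U)) ⊆ S ∧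
    {ω : Finset U | ω ∈ S ∧ ∀ ω' ∈ S, drasticToSet ω M' ≤ drasticToSet ω' M'} =
      (↑K : Set (Finset U))

lemma drastic_mem {U : Type*} [DecidableEq U] {ω : Finset U} {M : Set (Finset U)}
    (h : ω ∈ M) : drasticToSet ω M = 0 := by
  apply Nat.sInf_eq_zero.2
  exact Or.inl ⟨ω, h, by simp⟩

lemma drastic_empty {U : Type*} [DecidableEq U] (ω : Finset U) :
    drasticToSet ω (∅ : Set (Finset U)) = 0 := by
  apply Nat.sInf_eq_zero.2
  right
  ext n
  simp

lemma drastic_not_mem {U : Type*} [DecidableEq U] {ω : Finset U} {M : Set (Finset U)}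
    (h : ω ∉ M) (hM : M.Nonempty) : drasticToSet ω M = 1 := by
  obtain ⟨τ, hτ⟩ := hM
  have hset : {n : ℕ | ∃ τ ∈ M, n = if ω = τ then 0 else 1} = {1} := by
    ext n
    simp only [Set.mem_setOf_eq, Set.mem_singleton_iff]
    constructor
    · rintro ⟨σ, hσ, rfl⟩
      rw [if_neg]
      rintro rfl; exact h hσ
    · rintro rfl
      refine ⟨τ, hτ, ?_⟩
      rw [if_neg]
      rintro rfl; exact h hτ
  rw [drasticToSet, hset, csInf_singleton]

theorem stmt_18 {U : Type*} [DecidableEq U] [Fintype U]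
    (Cl : Set (Finset U) → Set (Finset U))
    (hmono : ∀ M N : Set (Finset U), M ⊆ N → Cl M ⊆ Cl N)
    (hsingle : ∀ x : Finset U, Cl {x} = {x})
    (hempty : Cl ∅ = ∅)
    (hidem : ∀ M : Set (Finset U), Cl (Cl M) = Cl M)
    (K : Finset (Finset U)) :
    (drasticSimplifiable Cl K ↔ Cl (↑K : Set (Finset U)) = (↑K : Set (Finset U))) ∧
    (Cl (↑K : Set (Finset U)) ≠ (↑K : Set (Finset U)) →
      ∀ M' : Set (Finset U), Cl M' = M' → (↑K : Set (Finset U)) ⊆ M' →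
        (↑K : Set (Finset U)) ⊂
          {ω : Finset U | ω ∈ Cl (↑K : Set (Finset U)) ∧ drasticToSet ω M' = 0}) := by
  have hKsub : (↑K : Set (Finset U)) ⊆ Cl ↑K := by
    intro x hx
    have : x ∈ Cl {x} := by rw [hsingle]; rfl
    exact hmono {x} ↑K (Set.singleton_subset_iff.2 hx) this
  constructor
  · constructor
    · rintro ⟨M', S, hM', hS, hKS, hmin⟩
      by_cases hM'e : M' = ∅
      · subst hM'e
        have hSK : S = (↑K : Set (Finset U)) := by
          rw [← hmin]
          ext ω
          simp [drastic_empty]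
        rw [hSK] at hS
        exact hS
      · have hM'ne : M'.Nonempty := Set.nonempty_iff_ne_empty.2 hM'e
        by_cases hint : (S ∩ M').Nonempty
        · have hKeq : (↑K : Set (Finset U)) = S ∩ M' := by
            rw [← hmin]
            ext ω
            constructor
            · rintro ⟨hωS, hωmin⟩
              refine ⟨hωS, ?_⟩
              obtain ⟨σ, hσS, hσM⟩ := hint
              have hle := hωmin σ hσS
              rw [drastic_mem hσM] at hle
              have h0 : drasticToSet ω M' = 0 := Nat.le_zero.1 hle
              by_contra hω
              rw [drastic_not_mem hω hM'ne] at h0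
              exact one_ne_zero h0
            · rintro ⟨hωS, hωM⟩
              exact ⟨hωS, fun ω' _ => by rw [drastic_mem hωM]; exact Nat.zero_le _⟩
          have hcl : Cl ↑K ⊆ (↑K : Set (Finset U)) := by
            rw [hKeq]
            intro x hx
            exact ⟨hS ▸ hmono _ S Set.inter_subset_left hx,
                   hM' ▸ hmono _ M' Set.inter_subset_right hx⟩
          exact subset_antisymm hcl hKsub
        · have hdis : ∀ ω ∈ S, ω ∉ M' := by
            intro ω hω hωM
            exact hint ⟨ω, hω, hωM⟩
          have hSK : S = (↑K : Set (Finset U)) := by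
            rw [← hmin]
            ext ω
            simp only [Set.mem_setOf_eq, iff_self_and]
            intro hωS ω' hω'
            rw [drastic_not_mem (hdis ω hωS) hM'ne,
                drastic_not_mem (hdis ω' hω') hM'ne]
          rw [hSK] at hS
          exact hS
    · intro h
      refine ⟨↑K, ↑K, h, h, subset_rfl, ?_⟩
      ext ω
      simp only [Set.mem_setOf_eq, and_iff_left_iff_imp]
      intro hω ω' _
      rw [drastic_mem hω]
      exact Nat.zero_le _
  · intro hne M' hM' hKM'
    have hClKM' : Cl ↑K ⊆ M' := hM' ▸ hmono ↑K M' hKM'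
    have hset : {ω : Finset U | ω ∈ Cl (↑K : Set (Finset U)) ∧ drasticToSet ω M' = 0}
        = Cl (↑K : Set (Finset U)) := by
      ext ω
      simp only [Set.mem_setOf_eq, and_iff_left_iff_imp]
      intro h
      exact drastic_mem (hClKM' h)
    rw [hset]
    exact hKsub.ssubset_of_ne (Ne.symm hne)
end
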